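/- Let I ⊆ ℝ be an open interval and φ : I → ℝ twice differentiable with φ > 0 on I. Let ζ, η, p be real numbers with ζ ≠ 0, η ≠ 0, ζ − p ≠ 0 and η − p·ζ ≠ 0. Then on I: (ζ²/η)·(φ^{η/ζ})''/φ^{η/ζ} − (p/ζ)·(φ^ζ)''/φ^ζ = ((ζ − p)²/(η − p·ζ))·ψ''/ψ, where ψ := φ^{(η − p·ζ)/(ζ − p)}. -/

import Mathlib

open Filter Topology

/-- `(φ^t)''/φ^t` written in terms of `U = (φ'/φ)²` and `V = φ''/φ`. -/
def rpowDerivRatio (U V t : ℝ) : ℝ := t * (t - 1) * U + t * V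

theorem deriv_deriv_rpow_const {φ : ℝ → ℝ} {x : ℝ} (t : ℝ)
    (hφ : ∀ᶠ y in 𝓝 x, DifferentiableAt ℝ φ y ∧ φ y ≠ 0)
    (hφ' : DifferentiableAt ℝ (deriv φ) x) :
    deriv (deriv fun y => φ y ^ t) x =
      t * (t - 1) * φ x ^ (t - 2) * deriv φ x ^ 2 + t * φ x ^ (t - 1) * deriv (deriv φ) x := by
  have hderiv : deriv (fun y => φ y ^ t) =ᶠ[𝓝 x] fun y => deriv φ y * t * φ y ^ (t - 1) := by
    filter_upwards [hφ] with y ⟨hdy, hy⟩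
    exact (hdy.hasDerivAt.rpow_const (Or.inl hy)).deriv
  obtain ⟨hdx, hx⟩ := hφ.self_of_nhds
  have hpow : HasDerivAt (fun y => φ y ^ (t - 1)) (deriv φ x * (t - 1) * φ x ^ (t - 2)) x := by
    simpa only [sub_sub, one_add_one_eq_two] using
      hdx.hasDerivAt.rpow_const (p := t - 1) (Or.inl hx)
  have hprod := (hφ'.hasDerivAt.mul_const t).fun_mul hpow
  rw [hderiv.deriv_eq, hprod.deriv]
  ring

theorem deriv_deriv_rpow_const_div {φ : ℝ → ℝ} {x : ℝ} (t : ℝ)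
    (hφ : ∀ᶠ y in 𝓝 x, DifferentiableAt ℝ φ y ∧ φ y ≠ 0)
    (hφ' : DifferentiableAt ℝ (deriv φ) x) (hpos : 0 < φ x) :
    deriv (deriv fun y => φ y ^ t) x / φ x ^ t =
      rpowDerivRatio ((deriv φ x / φ x) ^ 2) (deriv (deriv φ) x / φ x) t := by
  rw [deriv_deriv_rpow_const t hφ hφ', Real.rpow_sub hpos, Real.rpow_sub_one hpos.ne',
    Real.rpow_two, rpowDerivRatio]
  have : φ x ^ t ≠ 0 := (Real.rpow_pos_of_pos hpos t).ne'
  field_simp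

/-- Lemma 2.8 of the paper: since `rpowDerivRatio U V t` is linear in `t²` and `t`, two terms
`rᵢ (φ^{aᵢ})''/φ^{aᵢ}` merge into one once the moments `∑ rᵢ aᵢ` and `∑ rᵢ aᵢ²` match. -/
theorem mul_rpowDerivRatio_add_mul (U V r₁ a₁ r₂ a₂ r a : ℝ)
    (h₁ : r * a = r₁ * a₁ + r₂ * a₂) (h₂ : r * a ^ 2 = r₁ * a₁ ^ 2 + r₂ * a₂ ^ 2) :
    r₁ * rpowDerivRatio U V a₁ + r₂ * rpowDerivRatio U V a₂ = r * rpowDerivRatio U V a := by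
  unfold rpowDerivRatio
  linear_combination (-U) * h₂ - (V - U) * h₁

theorem stmt_9_general (I : Set ℝ) (hIopen : IsOpen I)
    (φ : ℝ → ℝ)
    (hφ : ∀ x ∈ I, DifferentiableAt ℝ φ x)
    (hφ' : ∀ x ∈ I, DifferentiableAt ℝ (deriv φ) x)
    (hφpos : ∀ x ∈ I, 0 < φ x)
    (ζ η p : ℝ) (hζ : ζ ≠ 0) (hη : η ≠ 0) (hζp : ζ - p ≠ 0) (hηp : η - p * ζ ≠ 0)
    (ψ : ℝ → ℝ) (hψ : ψ = fun y => φ y ^ ((η - p * ζ) / (ζ - p))) :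
    ∀ x ∈ I,
      (ζ ^ 2 / η) * (deriv (deriv (fun y => φ y ^ (η / ζ))) x / φ x ^ (η / ζ)) -
        (p / ζ) * (deriv (deriv (fun y => φ y ^ ζ)) x / φ x ^ ζ) =
      ((ζ - p) ^ 2 / (η - p * ζ)) * (deriv (deriv ψ) x / ψ x) := by
  intro x hx
  subst hψ
  have hnear : ∀ᶠ y in 𝓝 x, DifferentiableAt ℝ φ y ∧ φ y ≠ 0 := by
    filter_upwards [hIopen.mem_nhds hx] with y hy using ⟨hφ y hy, (hφpos y hy).ne'⟩
  have hηp' : η - ζ * p ≠ 0 := by rwa [mul_comm]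
  simp only [deriv_deriv_rpow_const_div _ hnear (hφ' x hx) (hφpos x hx)]
  have hmerge := mul_rpowDerivRatio_add_mul ((deriv φ x / φ x) ^ 2) (deriv (deriv φ) x / φ x)
    (ζ ^ 2 / η) (η / ζ) (-(p / ζ)) ζ ((ζ - p) ^ 2 / (η - p * ζ)) ((η - p * ζ) / (ζ - p))
    (by field_simp; ring) (by field_simp; ring)
  linarith

/-- The analytic identity underlying Corollary 4.5 of the paper: for `φ > 0`
twice differentiable on an open interval `I` and reals `ζ ≠ 0`, `η ≠ 0`,
`ζ - p ≠ 0`, `η - pζ ≠ 0`, with `ψ = φ^{(η - pζ)/(ζ - p)}`,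
`(ζ²/η)(φ^{η/ζ})''/φ^{η/ζ} - (p/ζ)(φ^ζ)''/φ^ζ = ((ζ-p)²/(η-pζ)) ψ''/ψ` on `I`. -/
theorem stmt_9 (I : Set ℝ) (hIopen : IsOpen I) (hIconn : I.OrdConnected)
    (φ : ℝ → ℝ)
    (hφ : ∀ x ∈ I, DifferentiableAt ℝ φ x)
    (hφ' : ∀ x ∈ I, DifferentiableAt ℝ (deriv φ) x)
    (hφpos : ∀ x ∈ I, 0 < φ x)
    (ζ η p : ℝ) (hζ : ζ ≠ 0) (hη : η ≠ 0) (hζp : ζ - p ≠ 0) (hηp : η - p * ζ ≠ 0)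
    (ψ : ℝ → ℝ) (hψ : ψ = fun y => φ y ^ ((η - p * ζ) / (ζ - p))) :
    ∀ x ∈ I,
      (ζ ^ 2 / η) * (deriv (deriv (fun y => φ y ^ (η / ζ))) x / φ x ^ (η / ζ)) -
        (p / ζ) * (deriv (deriv (fun y => φ y ^ ζ)) x / φ x ^ ζ) =
      ((ζ - p) ^ 2 / (η - p * ζ)) * (deriv (deriv ψ) x / ψ x) :=
  stmt_9_general I hIopen φ hφ hφ' hφpos ζ η p hζ hη hζp hηp ψ hψ
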